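/- The expected Data Reconstruction Attack success rate of MSS satisfies E[DRA] ≥ (1/ℓ) ∑_{j=0}^{ℓ−1} p_j / (ω_j · ⌈k/m_j⌉), with equality when each m_j divides k. -/

import Mathlib

open Finset
open scoped BigOperators

/-!
Every residue class of `[k]` modulo `m` has at most `⌈k/m⌉` elements. Hence for a class `z` with
`n z > 0`, whatever the fillers are, the total weight `n z + T` of the `ω` classes sharing the
observation is at most `ω ⌈k/m⌉`, and `E[1/(n z + T)] ≥ 1/(ω ⌈k/m⌉)`. The weights `n z / k`
sum to one, so the weighted sum over `z` keeps this bound. When `m ∣ k` every class has exactly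
`k/m` elements and all these inequalities are equalities.
-/

lemma card_filter_mod_eq_le_ceil {m : ℕ} (hm : 0 < m) (k z : ℕ) :
    #{x ∈ range k | x % m = z} ≤ ⌈(k : ℝ) / m⌉₊ := by
  refine (card_le_card_of_injOn (· / m) (fun x hx => ?_) fun x hx y hy hxy => ?_).trans_eq
    (card_range _)
  · simp only [coe_filter, mem_range, Set.mem_ofPred_eq, coe_range, Set.mem_Iio] at hx ⊢
    rw [Nat.lt_ceil, lt_div_iff₀ (by positivity)]
    exact_mod_cast (Nat.div_mul_le_self x m).trans_lt hx.1
  · simp only [coe_filter, mem_range, Set.mem_ofPred_eq] at hx hy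
    rw [← Nat.div_add_mod x m, ← Nat.div_add_mod y m, hx.2, hy.2]
    simp_all

lemma card_filter_mod_eq_div_of_dvd {m k z : ℕ} (hz : z < m) (hd : m ∣ k) :
    #{x ∈ range k | x % m = z} = k / m := by
  have h := Nat.count_modEq_card k (z.zero_le.trans_lt hz) z
  simpa [Nat.count_eq_card_filter_range, Nat.ModEq, Nat.mod_eq_of_lt hz,
    Nat.mod_eq_zero_of_dvd hd] using h

lemma sum_card_filter_mod_eq {m : ℕ} (hm : 0 < m) (k : ℕ) :
    ∑ z ∈ range m, #{x ∈ range k | x % m = z} = k := by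
  simpa using (card_eq_sum_card_fiberwise (s := range k) (t := range m)
    fun x _ => mem_range.2 (Nat.mod_lt x hm)).symm

lemma sum_div_mul_const {ι : Type*} {s : Finset ι} {n : ι → ℕ} {k : ℕ}
    (hsum : ∑ z ∈ s, n z = k) (hk : k ≠ 0) (c : ℝ) :
    ∑ z ∈ s, (n z : ℝ) / k * c = c := by
  rw [← sum_mul, ← sum_div, ← Nat.cast_sum, hsum, div_self (by exact_mod_cast hk), one_mul]

section ExpectedInvWeight

variable {ι : Type*} [DecidableEq ι] {s : Finset ι} {n : ι → ℕ} {w : ℕ} {z : ι}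

/-- `E[1 / (n z + T)]`, where `T = ∑ u ∈ S, n u` for a uniform `(w - 1)`-subset `S` of
`s \ {z}`. -/
noncomputable def expectedInvWeight (s : Finset ι) (n : ι → ℕ) (w : ℕ) (z : ι) : ℝ :=
  𝔼 S ∈ (s.erase z).powersetCard (w - 1), 1 / ((n z : ℝ) + ∑ u ∈ S, (n u : ℝ))

lemma powersetCard_pred_erase_nonempty (hz : z ∈ s) (hw : 1 ≤ w) (hws : w ≤ #s) :
    ((s.erase z).powersetCard (w - 1)).Nonempty :=
  powersetCard_nonempty.2 (by rw [card_erase_of_mem hz]; omega)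

lemma one_div_mul_le_expectedInvWeight {M : ℕ} (hz : z ∈ s) (hw : 1 ≤ w) (hws : w ≤ #s)
    (hnz : 0 < n z) (hnM : ∀ u ∈ s, n u ≤ M) :
    1 / ((w : ℝ) * M) ≤ expectedInvWeight s n w z := by
  refine le_expect (powersetCard_pred_erase_nonempty hz hw hws) fun S hS => ?_
  obtain ⟨hSs, hS⟩ := mem_powersetCard.1 hS
  have hle : n z + ∑ u ∈ S, n u ≤ w * M := calc
    n z + ∑ u ∈ S, n u ≤ M + #S • M :=
      add_le_add (hnM z hz) (sum_le_card_nsmul _ _ _ fun u hu => hnM u (mem_of_mem_erase (hSs hu)))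
    _ = w * M := by rw [hS, smul_eq_mul, ← one_add_mul, Nat.add_sub_cancel' hw]
  refine one_div_le_one_div_of_le ?_ (by exact_mod_cast hle)
  exact add_pos_of_pos_of_nonneg (by exact_mod_cast hnz) (sum_nonneg fun _ _ => Nat.cast_nonneg _)

lemma expectedInvWeight_of_const {q : ℕ} (hz : z ∈ s) (hw : 1 ≤ w) (hws : w ≤ #s)
    (hn : ∀ u ∈ s, n u = q) : expectedInvWeight s n w z = 1 / ((w : ℝ) * q) := by
  rw [expectedInvWeight, ← expect_const (powersetCard_pred_erase_nonempty hz hw hws) (1 / _)]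
  refine expect_congr rfl fun S hS => ?_
  obtain ⟨hSs, hS⟩ := mem_powersetCard.1 hS
  rw [hn z hz, sum_congr rfl fun u hu => by rw [hn u (mem_of_mem_erase (hSs hu))], sum_const, hS,
    nsmul_eq_mul, Nat.cast_pred hw]
  ring

variable {k : ℕ}

lemma one_div_mul_le_sum_mul_expectedInvWeight {M : ℕ} (hsum : ∑ z ∈ s, n z = k) (hk : k ≠ 0)
    (hw : 1 ≤ w) (hws : w ≤ #s) (hnM : ∀ u ∈ s, n u ≤ M) :
    1 / ((w : ℝ) * M) ≤ ∑ z ∈ s, (n z : ℝ) / k * expectedInvWeight s n w z := by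
  rw [← sum_div_mul_const hsum hk (1 / ((w : ℝ) * M))]
  refine sum_le_sum fun z hz => ?_
  rcases (n z).eq_zero_or_pos with hnz | hnz
  · simp [hnz]
  · gcongr
    exact one_div_mul_le_expectedInvWeight hz hw hws hnz hnM

lemma sum_mul_expectedInvWeight_of_const {q : ℕ} (hsum : ∑ z ∈ s, n z = k) (hk : k ≠ 0)
    (hw : 1 ≤ w) (hws : w ≤ #s) (hn : ∀ u ∈ s, n u = q) :
    ∑ z ∈ s, (n z : ℝ) / k * expectedInvWeight s n w z = 1 / ((w : ℝ) * q) := by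
  rw [← sum_div_mul_const hsum hk (1 / ((w : ℝ) * q))]
  exact sum_congr rfl fun z hz => by rw [expectedInvWeight_of_const hz hw hws hn]

end ExpectedInvWeight

lemma one_div_mul_ceil_le_sum_residue {k m w : ℕ} (hk : k ≠ 0) (hw : 1 ≤ w) (hwm : w ≤ m) :
    1 / ((w : ℝ) * ⌈(k : ℝ) / m⌉₊) ≤ ∑ z ∈ range m, (#{x ∈ range k | x % m = z} : ℝ) / k *
      expectedInvWeight (range m) (fun z => #{x ∈ range k | x % m = z}) w z := by
  have hm : 0 < m := by omega
  exact one_div_mul_le_sum_mul_expectedInvWeight (sum_card_filter_mod_eq hm k) hk hw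
    (by rwa [card_range]) fun z _ => card_filter_mod_eq_le_ceil hm k z

lemma sum_residue_mul_expectedInvWeight_of_dvd {k m w : ℕ} (hk : k ≠ 0) (hw : 1 ≤ w)
    (hwm : w ≤ m) (hd : m ∣ k) :
    ∑ z ∈ range m, (#{x ∈ range k | x % m = z} : ℝ) / k *
      expectedInvWeight (range m) (fun z => #{x ∈ range k | x % m = z}) w z =
      1 / ((w : ℝ) * ⌈(k : ℝ) / m⌉₊) := by
  have hm : 0 < m := by omega
  rw [← Nat.cast_div hd (by positivity), Nat.ceil_natCast]
  exact sum_mul_expectedInvWeight_of_const (sum_card_filter_mod_eq hm k) hk hw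
    (by rwa [card_range]) fun z hz => card_filter_mod_eq_div_of_dvd (mem_range.1 hz) hd

theorem mss_dra_lower_bound_general (ℓ k : ℕ) (hk : 0 < k)
    (m ω : Fin ℓ → ℕ) (p : Fin ℓ → ℝ)
    (hω : ∀ j, 1 ≤ ω j ∧ ω j ≤ m j)
    (hp : ∀ j, 0 ≤ p j ∧ p j ≤ 1) :
    let n : Fin ℓ → ℕ → ℕ := fun j z => ((Finset.range k).filter (fun x => x % m j = z)).card
    let Erec : Fin ℓ → ℕ → ℝ := fun j z =>
      (∑ S ∈ ((Finset.range (m j)).erase z).powersetCard (ω j - 1),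
          (1 : ℝ) / ((n j z : ℝ) + ∑ u ∈ S, (n j u : ℝ))) /
        ((((Finset.range (m j)).erase z).powersetCard (ω j - 1)).card : ℝ)
    let DRA : ℝ := (1 / ℓ : ℝ) * ∑ j, p j * ∑ z ∈ Finset.range (m j),
      ((n j z : ℝ) / k) * Erec j z
    ((1 / ℓ : ℝ) * ∑ j, p j / ((ω j : ℝ) * (⌈(k : ℝ) / (m j : ℝ)⌉₊ : ℝ)) ≤ DRA) ∧
      ((∀ j, m j ∣ k) →
        DRA = (1 / ℓ : ℝ) * ∑ j, p j / ((ω j : ℝ) * (⌈(k : ℝ) / (m j : ℝ)⌉₊ : ℝ))) := by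
  intro n Erec DRA
  have hErec : ∀ j z, Erec j z = expectedInvWeight (range (m j)) (n j) (ω j) z :=
    fun j z => (expect_eq_sum_div_card _ _).symm
  refine ⟨?_, fun hd => ?_⟩
  · simp only [DRA, hErec, div_eq_mul_one_div (p _)]
    gcongr with j
    · exact (hp j).1
    · exact one_div_mul_ceil_le_sum_residue hk.ne' (hω j).1 (hω j).2
  · simp only [DRA, hErec, n, sum_residue_mul_expectedInvWeight_of_dvd hk.ne' (hω _).1 (hω _).2
      (hd _), mul_one_div]

/-- **Lower bound on the expected DRA of MSS.** With residue multiplicities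
`n j z = |{x ∈ [k] : x mod m j = z}|` and filler weight `T = ∑_{u ∈ S} n j u` for a
uniform `(ω j − 1)`-subset `S` of `[m j] \ {z}`, the exact expected reconstruction
success rate
`E[DRA] = (1/ℓ) ∑ j, p j ∑ z (n j z / k) · E[1/(n j z + T)]`
satisfies `E[DRA] ≥ (1/ℓ) ∑ j, p j / (ω j · ⌈k/m j⌉)`, with equality when every
`m j` divides `k`. -/
theorem mss_dra_lower_bound (ℓ k : ℕ) (hℓ : 0 < ℓ) (hk : 0 < k)
    (m ω : Fin ℓ → ℕ) (p : Fin ℓ → ℝ)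
    (hm : ∀ j, 0 < m j) (hω : ∀ j, 1 ≤ ω j ∧ ω j ≤ m j)
    (hp : ∀ j, 0 ≤ p j ∧ p j ≤ 1) :
    let n : Fin ℓ → ℕ → ℕ := fun j z => ((Finset.range k).filter (fun x => x % m j = z)).card
    let Erec : Fin ℓ → ℕ → ℝ := fun j z =>
      (∑ S ∈ ((Finset.range (m j)).erase z).powersetCard (ω j - 1),
          (1 : ℝ) / ((n j z : ℝ) + ∑ u ∈ S, (n j u : ℝ))) /
        ((((Finset.range (m j)).erase z).powersetCard (ω j - 1)).card : ℝ)
    let DRA : ℝ := (1 / ℓ : ℝ) * ∑ j, p j * ∑ z ∈ Finset.range (m j),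
      ((n j z : ℝ) / k) * Erec j z
    ((1 / ℓ : ℝ) * ∑ j, p j / ((ω j : ℝ) * (⌈(k : ℝ) / (m j : ℝ)⌉₊ : ℝ)) ≤ DRA) ∧
      ((∀ j, m j ∣ k) →
        DRA = (1 / ℓ : ℝ) * ∑ j, p j / ((ω j : ℝ) * (⌈(k : ℝ) / (m j : ℝ)⌉₊ : ℝ))) :=
  mss_dra_lower_bound_general ℓ k hk m ω p hω hp
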